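/- Let n be a positive integer, let x, y_1, …, y_n be vectors in H, and let p > 1 and q satisfy 1/p + 1/q = 1. Then ∑_{i=1}^n |(x, y_i)|^2 ≤ ‖x‖ · (∑_{i=1}^n |(x, y_i)|^p)^{1/(2p)} · (∑_{i=1}^n |(x, y_i)|^q)^{1/(2q)} · (max_{1≤i≤n} ∑_{j=1}^n |(y_i, y_j)|)^{1/2}. -/

import Mathlib

/-!
With `z = ∑ i, conj ⟪x, yᵢ⟫ • yᵢ` one has `⟪x, z⟫ = ∑ |⟪x, yᵢ⟫|²`, so Cauchy–Schwarz bounds the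
left-hand side by `‖x‖ ‖z‖`. Expanding `‖z‖²` bounds it by the quadratic form
`∑ᵢⱼ aᵢ |⟪yᵢ, yⱼ⟫| aⱼ` with `aᵢ = |⟪x, yᵢ⟫|`, and Hölder's inequality applied to the factorisation
`bᵢⱼ = bᵢⱼ^(1/p) bᵢⱼ^(1/q)` (the Schur test) bounds this form by
`M (∑ aᵢ^p)^(1/p) (∑ aᵢ^q)^(1/q)`, where `M` is the largest row sum of `|⟪yᵢ, yⱼ⟫|`.
-/

open Finset RCLike

open scoped InnerProductSpace ComplexConjugate

lemma Real.HolderConjugate.rpow_one_div_mul_rpow_one_div {p q t : ℝ} (hpq : p.HolderConjugate q)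
    (ht : 0 ≤ t) : t ^ (1 / p) * t ^ (1 / q) = t := by
  have hsum : 1 / p + 1 / q = 1 := by simpa only [one_div] using hpq.inv_add_inv_eq_one
  rw [← Real.rpow_add' ht (by rw [hsum]; norm_num), hsum, Real.rpow_one]

lemma Real.mul_rpow_one_div_rpow {p s t : ℝ} (hp : p ≠ 0) (hs : 0 ≤ s) (ht : 0 ≤ t) :
    (s * t ^ (1 / p)) ^ p = s ^ p * t := by
  rw [Real.mul_rpow hs (Real.rpow_nonneg ht _), ← Real.rpow_mul ht, one_div_mul_cancel hp,
    Real.rpow_one]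

lemma sum_sum_mul_rpow_one_div_rpow_le {ι : Type*} [Fintype ι] {p M : ℝ} (hp : p ≠ 0)
    {a : ι → ℝ} {b : ι → ι → ℝ} (ha : ∀ i, 0 ≤ a i) (hb : ∀ i j, 0 ≤ b i j)
    (hrow : ∀ i, ∑ j, b i j ≤ M) :
    ∑ i, ∑ j, (a i * b i j ^ (1 / p)) ^ p ≤ M * ∑ i, a i ^ p := calc
  ∑ i, ∑ j, (a i * b i j ^ (1 / p)) ^ p = ∑ i, a i ^ p * ∑ j, b i j := by
    simp only [mul_sum, Real.mul_rpow_one_div_rpow hp (ha _) (hb _ _)]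
  _ ≤ ∑ i, a i ^ p * M := by
    gcongr with i
    · exact Real.rpow_nonneg (ha i) _
    · exact hrow i
  _ = M * ∑ i, a i ^ p := by rw [← sum_mul, mul_comm]

/-- The Schur test. -/
theorem sum_mul_mul_le_of_sum_le {ι : Type*} [Fintype ι] {p q M : ℝ} (hpq : p.HolderConjugate q)
    {a c : ι → ℝ} {b : ι → ι → ℝ} (ha : ∀ i, 0 ≤ a i) (hc : ∀ j, 0 ≤ c j)
    (hb : ∀ i j, 0 ≤ b i j) (hrow : ∀ i, ∑ j, b i j ≤ M) (hcol : ∀ j, ∑ i, b i j ≤ M) :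
    ∑ i, ∑ j, a i * b i j * c j ≤ M * (∑ i, a i ^ p) ^ (1 / p) * (∑ j, c j ^ q) ^ (1 / q) := by
  rcases isEmpty_or_nonempty ι with _ | ⟨⟨i₀⟩⟩
  · simp [Real.zero_rpow hpq.inv_ne_zero, Real.zero_rpow hpq.symm.inv_ne_zero]
  have hM : 0 ≤ M := (sum_nonneg fun j _ => hb i₀ j).trans (hrow i₀)
  set f : ι × ι → ℝ := fun ij => a ij.1 * b ij.1 ij.2 ^ (1 / p)
  set g : ι × ι → ℝ := fun ij => c ij.2 * b ij.1 ij.2 ^ (1 / q)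
  have hf : ∑ ij, f ij ^ p ≤ M * ∑ i, a i ^ p := by
    simpa only [f, Fintype.sum_prod_type] using
      sum_sum_mul_rpow_one_div_rpow_le hpq.ne_zero ha hb hrow
  have hg : ∑ ij, g ij ^ q ≤ M * ∑ j, c j ^ q := by
    rw [Fintype.sum_prod_type, sum_comm]
    exact sum_sum_mul_rpow_one_div_rpow_le hpq.symm.ne_zero hc (fun j i => hb i j) hcol
  calc ∑ i, ∑ j, a i * b i j * c j = ∑ ij, f ij * g ij := by
        rw [Fintype.sum_prod_type]
        refine sum_congr rfl fun i _ => sum_congr rfl fun j _ => ?_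
        rw [← hpq.rpow_one_div_mul_rpow_one_div (hb i j)]
        ring
    _ ≤ (∑ ij, f ij ^ p) ^ (1 / p) * (∑ ij, g ij ^ q) ^ (1 / q) :=
        Real.inner_le_Lp_mul_Lq_of_nonneg _ hpq
          (fun ij _ => mul_nonneg (ha _) (Real.rpow_nonneg (hb _ _) _))
          (fun ij _ => mul_nonneg (hc _) (Real.rpow_nonneg (hb _ _) _))
    _ ≤ (M * ∑ i, a i ^ p) ^ (1 / p) * (M * ∑ j, c j ^ q) ^ (1 / q) := by
        have hf₀ : 0 ≤ ∑ ij, f ij ^ p :=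
          sum_nonneg fun _ _ => Real.rpow_nonneg (mul_nonneg (ha _) (Real.rpow_nonneg (hb _ _) _)) _
        have hg₀ : 0 ≤ ∑ ij, g ij ^ q :=
          sum_nonneg fun _ _ => Real.rpow_nonneg (mul_nonneg (hc _) (Real.rpow_nonneg (hb _ _) _)) _
        exact mul_le_mul (Real.rpow_le_rpow hf₀ hf hpq.one_div_nonneg)
          (Real.rpow_le_rpow hg₀ hg hpq.symm.one_div_nonneg) (Real.rpow_nonneg hg₀ _)
          (Real.rpow_nonneg (hf₀.trans hf) _)
    _ = M * (∑ i, a i ^ p) ^ (1 / p) * (∑ j, c j ^ q) ^ (1 / q) := by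
        rw [Real.mul_rpow hM (sum_nonneg fun i _ => Real.rpow_nonneg (ha i) _),
          Real.mul_rpow hM (sum_nonneg fun j _ => Real.rpow_nonneg (hc j) _)]
        linear_combination ((∑ i, a i ^ p) ^ (1 / p) * (∑ j, c j ^ q) ^ (1 / q)) *
          hpq.rpow_one_div_mul_rpow_one_div hM

section InnerProductSpace

variable {𝕜 E ι : Type*} [RCLike 𝕜] [NormedAddCommGroup E] [InnerProductSpace 𝕜 E] [Fintype ι]

lemma norm_sum_smul_sq_le (c : ι → 𝕜) (y : ι → E) :
    ‖∑ i, c i • y i‖ ^ 2 ≤ ∑ i, ∑ j, ‖c i‖ * ‖⟪y i, y j⟫_𝕜‖ * ‖c j‖ := by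
  have hexpand : ⟪∑ i, c i • y i, ∑ j, c j • y j⟫_𝕜 =
      ∑ i, ∑ j, conj (c i) * ⟪y i, y j⟫_𝕜 * c j := by
    rw [sum_inner]
    refine sum_congr rfl fun i _ => ?_
    rw [inner_smul_left, inner_sum, mul_sum]
    refine sum_congr rfl fun j _ => ?_
    rw [inner_smul_right]
    ring
  calc ‖∑ i, c i • y i‖ ^ 2 = re ⟪∑ i, c i • y i, ∑ j, c j • y j⟫_𝕜 :=
        (inner_self_eq_norm_sq _).symm
    _ ≤ ‖∑ i, ∑ j, conj (c i) * ⟪y i, y j⟫_𝕜 * c j‖ := hexpand ▸ re_le_norm _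
    _ ≤ ∑ i, ∑ j, ‖conj (c i) * ⟪y i, y j⟫_𝕜 * c j‖ :=
        (norm_sum_le _ _).trans (sum_le_sum fun i _ => norm_sum_le _ _)
    _ = ∑ i, ∑ j, ‖c i‖ * ‖⟪y i, y j⟫_𝕜‖ * ‖c j‖ := by simp only [norm_mul, RCLike.norm_conj]

lemma inner_sum_conj_inner_smul (x : E) (y : ι → E) :
    ⟪x, ∑ i, conj ⟪x, y i⟫_𝕜 • y i⟫_𝕜 = ((∑ i, ‖⟪x, y i⟫_𝕜‖ ^ 2 : ℝ) : 𝕜) := by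
  simp only [inner_sum, inner_smul_right, ofReal_sum, ofReal_pow, ← mul_conj, mul_comm]

theorem sq_sum_norm_inner_sq_le (x : E) (y : ι → E) :
    (∑ i, ‖⟪x, y i⟫_𝕜‖ ^ 2) ^ 2 ≤
      ‖x‖ ^ 2 * ∑ i, ∑ j, ‖⟪x, y i⟫_𝕜‖ * ‖⟪y i, y j⟫_𝕜‖ * ‖⟪x, y j⟫_𝕜‖ := by
  set z := ∑ i, conj ⟪x, y i⟫_𝕜 • y i
  have hS : ∑ i, ‖⟪x, y i⟫_𝕜‖ ^ 2 ≤ ‖x‖ * ‖z‖ := by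
    have := norm_inner_le_norm (𝕜 := 𝕜) x z
    rwa [inner_sum_conj_inner_smul, norm_ofReal, abs_of_nonneg (by positivity)] at this
  calc (∑ i, ‖⟪x, y i⟫_𝕜‖ ^ 2) ^ 2 ≤ (‖x‖ * ‖z‖) ^ 2 := by gcongr
    _ = ‖x‖ ^ 2 * ‖z‖ ^ 2 := mul_pow _ _ _
    _ ≤ _ := by
      gcongr
      simpa only [RCLike.norm_conj] using norm_sum_smul_sq_le (fun i => conj ⟪x, y i⟫_𝕜) y

end InnerProductSpace

lemma sq_rpow_one_div_two_mul {r t : ℝ} (ht : 0 ≤ t) : (t ^ (1 / (2 * r))) ^ 2 = t ^ (1 / r) := by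
  rw [← Real.rpow_natCast, ← Real.rpow_mul ht]
  congr 1
  push_cast
  ring

theorem stmt_18 {H : Type*} [NormedAddCommGroup H] [InnerProductSpace ℂ H]
    {n : ℕ} (hn : 0 < n) (x : H) (y : Fin n → H) (p q : ℝ) (hp : 1 < p) (hpq : 1 / p + 1 / q = 1) :
    (∑ i, ‖(inner ℂ x (y i) : ℂ)‖ ^ 2) ≤ ‖x‖ * (∑ i, ‖(inner ℂ x (y i) : ℂ)‖ ^ p) ^ (1 / (2 * p)) * (∑ i, ‖(inner ℂ x (y i) : ℂ)‖ ^ q) ^ (1 / (2 * q)) * (Finset.univ.sup' (Finset.univ_nonempty_iff.mpr (Fin.pos_iff_nonempty.mp hn)) (fun i => (∑ j, ‖(inner ℂ (y i) (y j) : ℂ)‖))) ^ ((1 : ℝ) / 2) := by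
  have hpq' : p.HolderConjugate q :=
    Real.holderConjugate_iff.mpr ⟨hp, by simpa only [one_div] using hpq⟩
  set M := univ.sup' (univ_nonempty_iff.mpr (Fin.pos_iff_nonempty.mp hn))
    fun i => ∑ j, ‖⟪y i, y j⟫_ℂ‖
  have hrow : ∀ i, ∑ j, ‖⟪y i, y j⟫_ℂ‖ ≤ M := fun i =>
    le_sup' (fun i => ∑ j, ‖⟪y i, y j⟫_ℂ‖) (mem_univ i)
  have hcol : ∀ j, ∑ i, ‖⟪y i, y j⟫_ℂ‖ ≤ M := by simpa only [norm_inner_symm] using hrow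
  have hschur := sum_mul_mul_le_of_sum_le hpq' (fun i => norm_nonneg ⟪x, y i⟫_ℂ)
    (fun j => norm_nonneg ⟪x, y j⟫_ℂ) (fun i j => norm_nonneg _) hrow hcol
  have hM : 0 ≤ M := (sum_nonneg fun j _ => norm_nonneg ⟪y ⟨0, hn⟩, y j⟫_ℂ).trans (hrow ⟨0, hn⟩)
  refine (pow_le_pow_iff_left₀ (by positivity) (by positivity) two_ne_zero).1 ?_
  calc (∑ i, ‖⟪x, y i⟫_ℂ‖ ^ 2) ^ 2
      ≤ ‖x‖ ^ 2 * (M * (∑ i, ‖⟪x, y i⟫_ℂ‖ ^ p) ^ (1 / p) * (∑ i, ‖⟪x, y i⟫_ℂ‖ ^ q) ^ (1 / q)) :=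
        (sq_sum_norm_inner_sq_le x y).trans (mul_le_mul_of_nonneg_left hschur (sq_nonneg _))
    _ = _ := by
      rw [mul_pow, mul_pow, mul_pow, sq_rpow_one_div_two_mul (by positivity),
        sq_rpow_one_div_two_mul (by positivity), ← Real.sqrt_eq_rpow, Real.sq_sqrt hM]
      ring
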